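/- Let C_{k_1},…,C_{k_r} be defined from a lower triangular matrix A with k_1 > k_2 > ⋯ > k_r and r ≥ 2. Then C_{k_1} C_{k_2} ⋯ C_{k_r} = a_{k_1,k_2} a_{k_2,k_3} ⋯ a_{k_{r−1},k_r} · C_{k_1} L^{k_1 − k_r}. -/
import Mathlib


/-- The elementary factor `E_k` of `A`. -/
def elemFactor {n : ℕ} (A : Matrix (Fin n) (Fin n) ℂ) (k : Fin n) :
    Matrix (Fin n) (Fin n) ℂ :=
  Matrix.of fun i j => if j = k then A i j else if i = j then 1 else 0

/-- `C_k = E_k - I`. -/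
def Ck {n : ℕ} (A : Matrix (Fin n) (Fin n) ℂ) (k : Fin n) :
    Matrix (Fin n) (Fin n) ℂ :=
  elemFactor A k - 1

/-- The lower shift matrix `L`, with `L_{k+1,k} = 1`. -/
def shiftL (n : ℕ) : Matrix (Fin n) (Fin n) ℂ :=
  Matrix.of fun i j => if (i : ℕ) = (j : ℕ) + 1 then 1 else 0

lemma Ck_apply {n : ℕ} (A : Matrix (Fin n) (Fin n) ℂ) (k i j : Fin n) :
    Ck A k i j = if j = k then (A i k - if i = k then 1 else 0) else 0 := by
  simp only [Ck, elemFactor, Matrix.sub_apply, Matrix.of_apply, Matrix.one_apply]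
  by_cases h : j = k <;> by_cases h' : i = j <;> simp_all <;> ring

lemma shiftL_pow_apply {n : ℕ} (m : ℕ) (i j : Fin n) :
    (shiftL n ^ m) i j = if (i : ℕ) = (j : ℕ) + m then 1 else 0 := by
  induction m generalizing j with
  | zero => simp [Matrix.one_apply, Fin.ext_iff]
  | succ m ih =>
    rw [pow_succ, Matrix.mul_apply]
    by_cases hj : (j : ℕ) + 1 < n
    · rw [Finset.sum_eq_single_of_mem ⟨(j : ℕ) + 1, hj⟩ (Finset.mem_univ _)]
      · rw [ih]
        simp only [shiftL, Matrix.of_apply]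
        rw [if_pos trivial, mul_one]
        congr 1
        simp only [eq_iff_iff]
        omega
      · intro b _ hb
        have hb' : ¬ ((b : ℕ) = (j : ℕ) + 1) := fun h => hb (Fin.ext h)
        simp only [shiftL, Matrix.of_apply]
        rw [if_neg hb', mul_zero]
    · rw [Finset.sum_eq_zero, eq_comm, if_neg]
      · have := i.isLt; omega
      · intro b _
        have hb' : ¬ ((b : ℕ) = (j : ℕ) + 1) := by have := b.isLt; omega
        simp only [shiftL, Matrix.of_apply]
        rw [if_neg hb', mul_zero]

lemma CkL_apply {n : ℕ} (A : Matrix (Fin n) (Fin n) ℂ) (k0 j : Fin n) (hj : j ≤ k0)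
    (i l : Fin n) :
    (Ck A k0 * shiftL n ^ ((k0 : ℕ) - (j : ℕ))) i l =
      if l = j then Ck A k0 i k0 else 0 := by
  have hj' : (j : ℕ) ≤ (k0 : ℕ) := hj
  rw [Matrix.mul_apply, Finset.sum_eq_single_of_mem k0 (Finset.mem_univ k0)]
  · rw [shiftL_pow_apply]
    by_cases h : l = j
    · rw [if_pos h, if_pos (by rw [h]; omega), mul_one]
    · rw [if_neg h, if_neg (by rw [Fin.ext_iff] at h; omega), mul_zero]
  · intro b _ hb
    rw [Ck_apply, if_neg hb, zero_mul]

lemma key {n : ℕ} (A : Matrix (Fin n) (Fin n) ℂ) (k0 j k : Fin n)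
    (hjk : k < j) (hk0 : j ≤ k0) :
    (Ck A k0 * shiftL n ^ ((k0 : ℕ) - (j : ℕ))) * Ck A k =
      A j k • (Ck A k0 * shiftL n ^ ((k0 : ℕ) - (k : ℕ))) := by
  ext i l
  rw [Matrix.mul_apply, Matrix.smul_apply,
    CkL_apply A k0 k (le_of_lt (lt_of_lt_of_le hjk hk0)) i l,
    Finset.sum_eq_single_of_mem j (Finset.mem_univ j)]
  · rw [CkL_apply A k0 j hk0, if_pos rfl, Ck_apply A k j l]
    by_cases h : l = k
    · rw [if_pos h, if_pos h, if_neg hjk.ne', sub_zero, smul_eq_mul]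
      ring
    · rw [if_neg h, if_neg h, mul_zero, smul_zero]
  · intro b _ hb
    rw [CkL_apply A k0 j hk0, if_neg hb, zero_mul]

lemma aux {n : ℕ} (A : Matrix (Fin n) (Fin n) ℂ) :
    ∀ r (ks : Fin (r + 1) → Fin n), StrictAnti ks →
    (List.ofFn fun i => Ck A (ks i)).prod =
      (∏ i : Fin r, A (ks i.castSucc) (ks i.succ)) •
        (Ck A (ks 0) * shiftL n ^ ((ks 0 : ℕ) - (ks (Fin.last r) : ℕ))) := by
  intro r
  induction r with
  | zero =>
    intro ks _
    simp [Fin.last, List.ofFn_succ]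
  | succ r ih =>
    intro ks hks
    have h1 : (List.ofFn fun i : Fin (r + 2) => Ck A (ks i)) =
        (List.ofFn fun i : Fin (r + 1) => Ck A (ks i.castSucc)).concat
          (Ck A (ks (Fin.last (r + 1)))) := List.ofFn_succ' _
    have hmono : StrictAnti (fun i : Fin (r + 1) => ks i.castSucc) :=
      fun a b h => hks (Fin.castSucc_lt_castSucc_iff.mpr h)
    have h2 := ih (fun i => ks i.castSucc) hmono
    rw [h1, List.prod_concat, h2]
    simp only [Fin.castSucc_zero]
    rw [smul_mul_assoc,
      key A (ks 0) (ks ((Fin.last r).castSucc)) (ks (Fin.last (r + 1)))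
        (hks (Fin.castSucc_lt_last (Fin.last r)))
        (hks.antitone (Fin.zero_le _)),
      smul_smul, Fin.prod_univ_castSucc (n := r)]
    simp only [Fin.succ_castSucc, Fin.succ_last]

/-- Multiplication formula for a strictly decreasing sequence of indices
`ks 0 > ks 1 > ⋯ > ks r` (so `r + 1 ≥ 2` factors when `r ≥ 1`). -/
theorem stmt8 {n r : ℕ} (A : Matrix (Fin n) (Fin n) ℂ)
    (hlow : ∀ i j : Fin n, i < j → A i j = 0)
    (hr : 1 ≤ r) (ks : Fin (r + 1) → Fin n) (hks : StrictAnti ks) :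
    (List.ofFn fun i => Ck A (ks i)).prod =
      (∏ i : Fin r, A (ks i.castSucc) (ks i.succ)) •
        (Ck A (ks 0) * shiftL n ^ ((ks 0 : ℕ) - (ks (Fin.last r) : ℕ))) := by
  exact aux A r ks hks
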